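/- arXiv:1903.02768 — 5 statements merged into one kernel-verified Lean document; each statement's English description precedes it below -/
import Mathlib

section
/- Let P be an integral GT pattern with bounding sequence λ of positive length. Let j₀ = min{j ≥ 2 : λ^j_i ≠ λ^{j-1}_i for some i} and i₀ = min{i : λ^{j₀}_i ≠ λ^{j₀-1}_i}. Then the array P̃ obtained from P by replacing λ^j_{i₀} by λ^j_{i₀} + 1 for all i₀ ≤ j < j₀ is again an integral GT pattern with bounding sequence λ, satisfies P̃ ≥ P in row-wise dominance order, and length(P̃) = length(P) − 1. -/
/-- A Gelfand–Tsetlin pattern for `sl_{r+1}`: rows are indexed `1,…,r+1`,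
row `j` has entries `P j 1 ≥ … ≥ P j j`, with the interlacing condition
`P j i ≥ P (j-1) i ≥ P j (i+1)` for `1 ≤ i < j ≤ r+1`. -/
def IsGTPattern (r : ℕ) (P : ℕ → ℕ → ℤ) : Prop :=
  ∀ i j, 1 ≤ i → i < j → j ≤ r + 1 → P (j-1) i ≤ P j i ∧ P j (i+1) ≤ P (j-1) i

/-- The bounding sequence (last row) of the pattern is `lam`. -/
def Bounded (r : ℕ) (P : ℕ → ℕ → ℤ) (lam : ℕ → ℤ) : Prop :=
  ∀ i, 1 ≤ i → i ≤ r + 1 → P (r+1) i = lam i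

/-- Row-wise dominance: `Dom r P' P` means the partial row sums of `P'`
dominate those of `P` in every row. -/
def Dom (r : ℕ) (P' P : ℕ → ℕ → ℤ) : Prop :=
  ∀ j i, 1 ≤ i → i ≤ j → j ≤ r + 1 →
    ∑ s ∈ Finset.Icc 1 i, P j s ≤ ∑ s ∈ Finset.Icc 1 i, P' j s

/-- The `k`-th coordinate of the weight of a pattern: difference of row sums. -/
def wt (P : ℕ → ℕ → ℤ) (k : ℕ) : ℤ :=
  (∑ i ∈ Finset.Icc 1 k, P k i) - ∑ i ∈ Finset.Icc 1 (k-1), P (k-1) i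

/-- The length of a pattern. -/
def lengthP (r : ℕ) (P : ℕ → ℕ → ℤ) : ℤ :=
  ∑ j ∈ Finset.Icc 2 (r+1), ∑ i ∈ Finset.Icc 1 (j-1), (P j i - P (j-1) i)

/-!
Rows `i₀, …, j₀ - 1` agree on their common entries, so column `i₀` is constant along them,
equal to `P (j₀ - 1) i₀ < P j₀ i₀`. Raising that column segment by one keeps every
interlacing inequality: the one against row `j₀` has room by the strict inequality, and the
one against column `i₀ - 1` has room because `P (j - 1) (i₀ - 1) = P (j₀ - 1) (i₀ - 1) ≥ P j₀ i₀`.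
The length telescopes down each column to `∑ i, (λ i - P i i)`, and among the diagonal
entries only `P i₀ i₀` is raised.
-/

open Finset

theorem lengthP_eq_sum_sub_diag (r : ℕ) (P : ℕ → ℕ → ℤ) :
    lengthP r P = ∑ i ∈ Icc 1 r, (P (r + 1) i - P i i) := by
  rw [lengthP, sum_comm' (t' := Icc 1 r) (s' := fun i => Icc (i + 1) (r + 1))
    (fun j i => by simp only [mem_Icc]; omega)]
  refine sum_congr rfl fun i hi => ?_
  rw [← map_add_right_Icc i r 1, sum_map]
  simpa using sum_Icc_sub (mem_Icc.1 hi).2 (P · i)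

theorem lengthP_add (r : ℕ) (P Q : ℕ → ℕ → ℤ) :
    lengthP r (P + Q) = lengthP r P + lengthP r Q := by
  simp only [lengthP_eq_sum_sub_diag, Pi.add_apply, ← sum_add_distrib]
  exact sum_congr rfl fun _ _ => by ring

/-- The paper's `P̃` is `P + columnSegment i₀ j₀`. -/
def columnSegment (i₀ j₀ : ℕ) : ℕ → ℕ → ℤ :=
  fun j i => if i = i₀ ∧ i₀ ≤ j ∧ j < j₀ then 1 else 0

section

variable {r : ℕ} {P Q : ℕ → ℕ → ℤ} {i₀ j₀ : ℕ}

theorem columnSegment_nonneg (j i : ℕ) : 0 ≤ columnSegment i₀ j₀ j i := by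
  unfold columnSegment; split_ifs <;> omega

theorem columnSegment_of_le {j : ℕ} (hj : j₀ ≤ j) (i : ℕ) : columnSegment i₀ j₀ j i = 0 :=
  if_neg (by omega)

theorem lengthP_columnSegment (hi₀ : 1 ≤ i₀) (hi₀j₀ : i₀ < j₀) (hj₀ : j₀ ≤ r + 1) :
    lengthP r (columnSegment i₀ j₀) = -1 := by
  have hdiag : ∀ i ∈ Icc 1 r, columnSegment i₀ j₀ (r + 1) i - columnSegment i₀ j₀ i i =
      if i₀ = i then -1 else 0 := by
    intro i _
    simp only [columnSegment]
    split_ifs <;> omega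
  rw [lengthP_eq_sum_sub_diag, sum_congr rfl hdiag, sum_ite_eq, if_pos (by simp; omega)]

theorem dom_add_of_nonneg (hQ : ∀ j i, 0 ≤ Q j i) : Dom r (P + Q) P :=
  fun j _ _ _ _ => sum_le_sum fun s _ => le_add_of_nonneg_right (hQ j s)

theorem Bounded.add_of_lastRow_eq_zero {lam : ℕ → ℤ} (hb : Bounded r P lam)
    (hQ : ∀ i, Q (r + 1) i = 0) : Bounded r (P + Q) lam :=
  fun i hi hir => by simp only [Pi.add_apply, hQ, add_zero, hb i hi hir]

theorem eq_of_rows_agree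
    (hrows : ∀ j, 2 ≤ j → j < j₀ → ∀ i, 1 ≤ i → i < j → P j i = P (j - 1) i)
    {i j : ℕ} (hi : 1 ≤ i) (hij : i ≤ j) (hj : j < j₀) : P j i = P (j₀ - 1) i := by
  have from_diag : ∀ j, i ≤ j → j < j₀ → P j i = P i i := by
    intro j hij
    induction j, hij using Nat.le_induction with
    | base => exact fun _ => rfl
    | succ j hij ih =>
      intro hj
      rw [hrows (j + 1) (by omega) hj i hi (by omega), Nat.add_sub_cancel]
      exact ih (by omega)
  rw [from_diag j hij hj, from_diag (j₀ - 1) (by omega) (by omega)]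

theorem IsGTPattern.add_columnSegment (hP : IsGTPattern r P)
    (hrows : ∀ j, 2 ≤ j → j < j₀ → ∀ i, 1 ≤ i → i < j → P j i = P (j - 1) i)
    (hi₀ : 1 ≤ i₀) (hi₀j₀ : i₀ < j₀) (hj₀ : j₀ ≤ r + 1) (hstep : P (j₀ - 1) i₀ < P j₀ i₀) :
    IsGTPattern r (P + columnSegment i₀ j₀) := by
  intro i j hi hij hj
  obtain ⟨hdown, hup⟩ := hP i j hi hij hj
  simp only [Pi.add_apply, columnSegment]
  constructor
  · split_ifs with hbelow hhere <;> try omega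
    obtain ⟨rfl, hrange⟩ := hbelow
    obtain rfl : j = j₀ := by omega
    omega
  · split_ifs with hhere hbelow <;> try omega
    obtain ⟨rfl, -, hj'⟩ := hhere
    have hcol := eq_of_rows_agree hrows hi₀ (by omega) hj'
    have hleft := eq_of_rows_agree hrows hi (j := j - 1) (by omega) (by omega)
    have hinter := (hP i j₀ hi (by omega) hj₀).2
    omega

end

theorem tilde_pattern_general (r : ℕ) (lam : ℕ → ℤ) (P Pt : ℕ → ℕ → ℤ) (i₀ j₀ : ℕ)
    (hP : IsGTPattern r P) (hb : Bounded r P lam)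
    (hj₀r : j₀ ≤ r + 1)
    (hjmin : ∀ j, 2 ≤ j → j < j₀ → ∀ i, 1 ≤ i → i < j → P j i = P (j-1) i)
    (hi₀1 : 1 ≤ i₀) (hi₀j : i₀ < j₀) (hi₀d : P j₀ i₀ ≠ P (j₀-1) i₀)
    (hPt : ∀ j i, Pt j i = if i = i₀ ∧ i₀ ≤ j ∧ j < j₀ then P j i + 1 else P j i) :
    IsGTPattern r Pt ∧ Bounded r Pt lam ∧ Dom r Pt P ∧
      lengthP r Pt = lengthP r P - 1 := by
  obtain rfl : Pt = P + columnSegment i₀ j₀ := by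
    funext j i
    simp only [hPt, Pi.add_apply, columnSegment]
    split_ifs <;> simp
  have hstep : P (j₀ - 1) i₀ < P j₀ i₀ :=
    lt_of_le_of_ne (hP i₀ j₀ hi₀1 hi₀j hj₀r).1 hi₀d.symm
  refine ⟨hP.add_columnSegment hjmin hi₀1 hi₀j hj₀r hstep,
    hb.add_of_lastRow_eq_zero (columnSegment_of_le (by omega)),
    dom_add_of_nonneg columnSegment_nonneg, ?_⟩
  rw [lengthP_add, lengthP_columnSegment hi₀1 hi₀j hj₀r, sub_eq_add_neg]

/-- The array Pt obtained from a positive-length pattern P by adding 1 to the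
entry in position i₀ of each of the rows i₀, …, j₀-1 is again an integral GT
pattern with the same bounding sequence, dominates P row-wise, and has length
one less than that of P. -/
theorem tilde_pattern (r : ℕ) (lam : ℕ → ℤ) (P Pt : ℕ → ℕ → ℤ) (i₀ j₀ : ℕ)
    (hP : IsGTPattern r P) (hb : Bounded r P lam)
    (hlen : 0 < lengthP r P)
    (hj₀2 : 2 ≤ j₀) (hj₀r : j₀ ≤ r + 1)
    (hj₀d : ∃ i, 1 ≤ i ∧ i < j₀ ∧ P j₀ i ≠ P (j₀-1) i)
    (hjmin : ∀ j, 2 ≤ j → j < j₀ → ∀ i, 1 ≤ i → i < j → P j i = P (j-1) i)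
    (hi₀1 : 1 ≤ i₀) (hi₀j : i₀ < j₀) (hi₀d : P j₀ i₀ ≠ P (j₀-1) i₀)
    (himin : ∀ i, 1 ≤ i → i < i₀ → P j₀ i = P (j₀-1) i)
    (hPt : ∀ j i, Pt j i = if i = i₀ ∧ i₀ ≤ j ∧ j < j₀ then P j i + 1 else P j i) :
    IsGTPattern r Pt ∧ Bounded r Pt lam ∧ Dom r Pt P ∧
      lengthP r Pt = lengthP r P - 1 :=
  tilde_pattern_general r lam P Pt i₀ j₀ hP hb hj₀r hjmin hi₀1 hi₀j hi₀d hPt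
end

section
/- Let P, P̃, i₀, j₀ be as in the construction where P̃ increases entry i₀ of rows i₀, …, j₀−1 of P by 1. Let P' be any integral GT pattern with the same bounding sequence satisfying P' ≥ P̃, and let P'' be obtained from P' by decreasing by 1 exactly one entry in each of the rows i₀, …, j₀−1, assuming P'' is again a valid GT pattern. Then P'' ≥ P in the row-wise dominance order. -/
/-! Away from rows i₀, …, j₀ - 1 nothing changes. In those rows, the prefix sums of P̃ exceed those
of P by one from column i₀ on, and those of P'' lose at most one against P'. For prefixes
ending before column i₀, P is constant down the columns in rows i₀ - 1, …, j, so one compares in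
the untouched row i₀ - 1 and climbs back to row j using interlacing in P''. -/

open Finset

lemma sum_ite_and_eq_add (S : Finset ℕ) (f : ℕ → ℤ) (q : Prop) [Decidable q] (a : ℕ) (d : ℤ) :
    ∑ s ∈ S, (if q ∧ s = a then f s + d else f s) = ∑ s ∈ S, f s + if q ∧ a ∈ S then d else 0 := by
  by_cases hq : q
  · simp only [hq, true_and, ← sum_ite_eq' S a (fun _ => d), ← sum_add_distrib, add_ite, add_zero]
  · simp [hq]

lemma IsGTPattern.sum_Icc_le_of_le {r : ℕ} {Q : ℕ → ℕ → ℤ} (hQ : IsGTPattern r Q)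
    {i k j : ℕ} (hik : i ≤ k) (hkj : k ≤ j) (hj : j ≤ r + 1) :
    ∑ s ∈ Icc 1 i, Q k s ≤ ∑ s ∈ Icc 1 i, Q j s := by
  induction j, hkj using Nat.le_induction with
  | base => rfl
  | succ j hkj ih =>
    refine (ih (by omega)).trans (sum_le_sum fun s hs => ?_)
    rw [mem_Icc] at hs
    simpa using (hQ s (j + 1) hs.1 (by omega) hj).1

lemma column_eq_of_rows_eq {P : ℕ → ℕ → ℤ} {j₀ : ℕ}
    (hrows : ∀ j, 2 ≤ j → j < j₀ → ∀ i, 1 ≤ i → i < j → P j i = P (j-1) i)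
    {s k j : ℕ} (hs : 1 ≤ s) (hsk : s ≤ k) (hkj : k ≤ j) (hj : j < j₀) :
    P j s = P k s := by
  induction j, hkj using Nat.le_induction with
  | base => rfl
  | succ j hkj ih => simpa [ih (by omega)] using hrows (j + 1) (by omega) hj s hs (by omega)

theorem doubleprime_dominates_general (r : ℕ) (P Pt : ℕ → ℕ → ℤ) (i₀ j₀ : ℕ)
    (hjmin : ∀ j, 2 ≤ j → j < j₀ → ∀ i, 1 ≤ i → i < j → P j i = P (j-1) i)
    (hi₀1 : 1 ≤ i₀)
    (hPt : ∀ j i, Pt j i = if i = i₀ ∧ i₀ ≤ j ∧ j < j₀ then P j i + 1 else P j i)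
    (P' P'' : ℕ → ℕ → ℤ) (c : ℕ → ℕ)
    (hdom : Dom r P' Pt)
    (hP'' : ∀ j i, P'' j i =
      if i₀ ≤ j ∧ j < j₀ ∧ i = c j then P' j i - 1 else P' j i)
    (hP''pat : IsGTPattern r P'') :
    Dom r P'' P := by
  have sum_Pt : ∀ j i, ∑ s ∈ Icc 1 i, Pt j s =
      ∑ s ∈ Icc 1 i, P j s + if (i₀ ≤ j ∧ j < j₀) ∧ i₀ ∈ Icc 1 i then 1 else 0 := by
    intro j i
    simp_rw [hPt, ← sum_ite_and_eq_add, and_comm (a := _ = i₀)]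
  have sum_P'' : ∀ j i, ∑ s ∈ Icc 1 i, P'' j s =
      ∑ s ∈ Icc 1 i, P' j s + if (i₀ ≤ j ∧ j < j₀) ∧ c j ∈ Icc 1 i then -1 else 0 := by
    intro j i
    simp_rw [hP'', ← sum_ite_and_eq_add, and_assoc, sub_eq_add_neg]
  intro j i hi hij hjr
  have hdom_ji := hdom j i hi hij hjr
  by_cases hrow : i₀ ≤ j ∧ j < j₀
  swap
  · simpa [sum_Pt, sum_P'', hrow] using hdom_ji
  by_cases hii₀ : i₀ ≤ i
  · rw [sum_Pt, if_pos ⟨hrow, mem_Icc.2 ⟨hi₀1, hii₀⟩⟩] at hdom_ji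
    rw [sum_P'']
    split_ifs <;> linarith
  have hrow₀ : ¬ (i₀ ≤ i₀ - 1 ∧ i₀ - 1 < j₀) := by omega
  calc ∑ s ∈ Icc 1 i, P j s = ∑ s ∈ Icc 1 i, P (i₀ - 1) s := sum_congr rfl fun s hs => by
        rw [mem_Icc] at hs
        exact column_eq_of_rows_eq hjmin hs.1 (by omega) (by omega) hrow.2
    _ = ∑ s ∈ Icc 1 i, Pt (i₀ - 1) s := by simp [sum_Pt, hrow₀]
    _ ≤ ∑ s ∈ Icc 1 i, P' (i₀ - 1) s := hdom _ i hi (by omega) (by omega)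
    _ = ∑ s ∈ Icc 1 i, P'' (i₀ - 1) s := by simp [sum_P'', hrow₀]
    _ ≤ ∑ s ∈ Icc 1 i, P'' j s := hP''pat.sum_Icc_le_of_le (by omega) (by omega) hjr

/-- If P' ≥ Pt is a GT pattern with the same bounding sequence and P'' is
obtained from P' by decreasing by 1 exactly one entry in each of the rows
i₀, …, j₀-1, and P'' is again a GT pattern, then P'' ≥ P in the row-wise
dominance order. -/
theorem doubleprime_dominates (r : ℕ) (lam : ℕ → ℤ) (P Pt : ℕ → ℕ → ℤ) (i₀ j₀ : ℕ)
    (hP : IsGTPattern r P) (hb : Bounded r P lam)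
    (hlen : 0 < lengthP r P)
    (hj₀2 : 2 ≤ j₀) (hj₀r : j₀ ≤ r + 1)
    (hj₀d : ∃ i, 1 ≤ i ∧ i < j₀ ∧ P j₀ i ≠ P (j₀-1) i)
    (hjmin : ∀ j, 2 ≤ j → j < j₀ → ∀ i, 1 ≤ i → i < j → P j i = P (j-1) i)
    (hi₀1 : 1 ≤ i₀) (hi₀j : i₀ < j₀) (hi₀d : P j₀ i₀ ≠ P (j₀-1) i₀)
    (himin : ∀ i, 1 ≤ i → i < i₀ → P j₀ i = P (j₀-1) i)
    (hPt : ∀ j i, Pt j i = if i = i₀ ∧ i₀ ≤ j ∧ j < j₀ then P j i + 1 else P j i)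
    (P' P'' : ℕ → ℕ → ℤ) (c : ℕ → ℕ)
    (hP' : IsGTPattern r P') (hb' : Bounded r P' lam) (hdom : Dom r P' Pt)
    (hc : ∀ j, i₀ ≤ j → j < j₀ → 1 ≤ c j ∧ c j ≤ j)
    (hP'' : ∀ j i, P'' j i =
      if i₀ ≤ j ∧ j < j₀ ∧ i = c j then P' j i - 1 else P' j i)
    (hP''pat : IsGTPattern r P'') :
    Dom r P'' P :=
  doubleprime_dominates_general r P Pt i₀ j₀ hjmin hi₀1 hPt P' P'' c hdom hP'' hP''pat
end

section
/- With P, P̃, i₀, j₀ as in the previous construction: if P' ≥ P̃ is a GT pattern with the same bounding sequence and P'' is obtained from P' by decreasing by 1 exactly one entry in each of rows i₀, …, j₀−1 and P'' = P, then P' = P̃. -/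
/-!
Both `P̃` and, because `P'' = P`, also `P'` arise from `P` by raising one entry in each row
`j ∈ [i₀, j₀)`: the entry in column `i₀` for `P̃`, the one in column `c j` for `P'`. Comparing the
first `i₀` entries of row `j`, dominance forces `c j ≤ i₀`. If `c j < i₀`, the raised entry of
row `j` sits in a column where rows `j` and `j + 1` of `P` agree, so interlacing of `P'` forces
row `j + 1` to be raised in the same column. This is impossible in row `j₀`, and by downward
induction on `j` in every row below it. Hence `c ≡ i₀` and `P' = P̃`.
-/

open Finset

theorem IsGTPattern.congr {r : ℕ} {Q Q' : ℕ → ℕ → ℤ}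
    (h : ∀ j i, 1 ≤ i → i ≤ j → j ≤ r + 1 → Q j i = Q' j i) (hQ : IsGTPattern r Q) :
    IsGTPattern r Q' := by
  intro i j hi hij hj
  rw [← h (j - 1) i hi (by omega) (by omega), ← h j i hi hij.le hj,
    ← h j (i + 1) (by omega) hij hj]
  exact hQ i j hi hij hj

theorem Dom.congr_left {r : ℕ} {Q Q' R : ℕ → ℕ → ℤ}
    (h : ∀ j i, 1 ≤ i → i ≤ j → j ≤ r + 1 → Q j i = Q' j i) (hQ : Dom r Q R) : Dom r Q' R := by
  intro j i hi hij hj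
  rw [← sum_congr rfl fun s hs => h j s (mem_Icc.1 hs).1 ((mem_Icc.1 hs).2.trans hij) hj]
  exact hQ j i hi hij hj

theorem sum_ite_eq_add_one {α : Type*} [DecidableEq α] (s : Finset α) (f : α → ℤ) (a : α) :
    ∑ x ∈ s, (if x = a then f x + 1 else f x) = ∑ x ∈ s, f x + if a ∈ s then 1 else 0 := by
  rw [← sum_ite_eq' s a fun _ => (1 : ℤ), ← sum_add_distrib]
  exact sum_congr rfl fun x _ => by split_ifs <;> simp

def raiseEntries (P : ℕ → ℕ → ℤ) (i₀ j₀ : ℕ) (c : ℕ → ℕ) (j i : ℕ) : ℤ :=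
  if i₀ ≤ j ∧ j < j₀ ∧ i = c j then P j i + 1 else P j i

section raiseEntries

variable {P : ℕ → ℕ → ℤ} {i₀ j₀ : ℕ} {c : ℕ → ℕ}

theorem raiseEntries_congr {d : ℕ → ℕ} (h : ∀ j, i₀ ≤ j → j < j₀ → c j = d j) :
    raiseEntries P i₀ j₀ c = raiseEntries P i₀ j₀ d := by
  funext j i
  exact if_congr (and_congr_right fun h₁ => and_congr_right fun h₂ => by rw [h j h₁ h₂]) rfl rfl

theorem raiseEntries_row {j : ℕ} (hij : i₀ ≤ j) (hjj : j < j₀) :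
    raiseEntries P i₀ j₀ c j = fun i => if i = c j then P j i + 1 else P j i := by
  funext i
  simp [raiseEntries, hij, hjj]

theorem raiseEntries_of_ne {j i : ℕ} (h : i ≠ c j) : raiseEntries P i₀ j₀ c j i = P j i :=
  if_neg fun h' => h h'.2.2

theorem le_of_dom_raiseEntries {r j : ℕ} (hi₀ : 1 ≤ i₀) (hj₀r : j₀ ≤ r + 1)
    (hdom : Dom r (raiseEntries P i₀ j₀ c) (raiseEntries P i₀ j₀ fun _ => i₀))
    (hij : i₀ ≤ j) (hjj : j < j₀) : c j ≤ i₀ := by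
  have hrow := hdom j i₀ hi₀ hij (by omega)
  rw [raiseEntries_row hij hjj, raiseEntries_row hij hjj, sum_ite_eq_add_one,
    sum_ite_eq_add_one, if_pos (mem_Icc.2 ⟨hi₀, le_rfl⟩)] at hrow
  by_contra hc
  rw [if_neg fun hmem => hc (mem_Icc.1 hmem).2] at hrow
  omega

theorem succ_row_eq_of_lt {j i : ℕ}
    (hjmin : ∀ j, 2 ≤ j → j < j₀ → ∀ i, 1 ≤ i → i < j → P j i = P (j - 1) i)
    (himin : ∀ i, 1 ≤ i → i < i₀ → P j₀ i = P (j₀ - 1) i)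
    (hij : i₀ ≤ j) (hjj : j < j₀) (hi : 1 ≤ i) (hii : i < i₀) : P (j + 1) i = P j i := by
  rcases (Nat.succ_le_of_lt hjj).eq_or_lt with hlast | hlt
  · subst hlast
    simpa using himin i hi hii
  · simpa using hjmin (j + 1) (by omega) hlt i hi (by omega)

theorem eq_of_succ_of_isGTPattern_raiseEntries {r j : ℕ} (hj₀r : j₀ ≤ r + 1)
    (hjmin : ∀ j, 2 ≤ j → j < j₀ → ∀ i, 1 ≤ i → i < j → P j i = P (j - 1) i)
    (himin : ∀ i, 1 ≤ i → i < i₀ → P j₀ i = P (j₀ - 1) i)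
    (hpat : IsGTPattern r (raiseEntries P i₀ j₀ c))
    (hc : 1 ≤ c j) (hc_le : c j ≤ i₀) (hij : i₀ ≤ j) (hjj : j < j₀)
    (hsucc : j + 1 = j₀ ∨ c (j + 1) = i₀) : c j = i₀ := by
  by_contra hne
  have hlt : c j < i₀ := hc_le.lt_of_ne hne
  have hint := (hpat (c j) (j + 1) hc (by omega) (by omega)).1
  have hraised : raiseEntries P i₀ j₀ c j (c j) = P j (c j) + 1 := by
    simp [raiseEntries, hij, hjj]
  have hflat : raiseEntries P i₀ j₀ c (j + 1) (c j) = P (j + 1) (c j) := by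
    rcases hsucc with hlast | hnext
    · simp [raiseEntries, hlast]
    · exact raiseEntries_of_ne (by omega)
  rw [Nat.add_sub_cancel, hraised, hflat,
    succ_row_eq_of_lt hjmin himin hij hjj hc hlt] at hint
  omega

theorem eq_of_isGTPattern_raiseEntries {r : ℕ} (hj₀r : j₀ ≤ r + 1)
    (hjmin : ∀ j, 2 ≤ j → j < j₀ → ∀ i, 1 ≤ i → i < j → P j i = P (j - 1) i)
    (himin : ∀ i, 1 ≤ i → i < i₀ → P j₀ i = P (j₀ - 1) i)
    (hpat : IsGTPattern r (raiseEntries P i₀ j₀ c))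
    (hc : ∀ j, i₀ ≤ j → j < j₀ → 1 ≤ c j) (hc_le : ∀ j, i₀ ≤ j → j < j₀ → c j ≤ i₀)
    {j : ℕ} (hij : i₀ ≤ j) (hjj : j < j₀) : c j = i₀ := by
  have hstep := fun {j} (hij : i₀ ≤ j) (hjj : j < j₀) =>
    eq_of_succ_of_isGTPattern_raiseEntries hj₀r hjmin himin hpat (hc j hij hjj) (hc_le j hij hjj)
      hij hjj
  suffices ∀ d j, j + d + 1 = j₀ → i₀ ≤ j → c j = i₀ from this (j₀ - j - 1) j (by omega) hij
  intro d
  induction d with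
  | zero => exact fun j hj hij => hstep hij (by omega) (Or.inl (by omega))
  | succ d ih =>
    exact fun j hj hij => hstep hij (by omega) (Or.inr (ih (j + 1) (by omega) (by omega)))

end raiseEntries

theorem doubleprime_eq_forces_general (r : ℕ) (P Pt : ℕ → ℕ → ℤ) (i₀ j₀ : ℕ)
    (hj₀r : j₀ ≤ r + 1)
    (hjmin : ∀ j, 2 ≤ j → j < j₀ → ∀ i, 1 ≤ i → i < j → P j i = P (j-1) i)
    (hi₀1 : 1 ≤ i₀)
    (himin : ∀ i, 1 ≤ i → i < i₀ → P j₀ i = P (j₀-1) i)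
    (hPt : ∀ j i, Pt j i = if i = i₀ ∧ i₀ ≤ j ∧ j < j₀ then P j i + 1 else P j i)
    (P' P'' : ℕ → ℕ → ℤ) (c : ℕ → ℕ)
    (hP' : IsGTPattern r P') (hdom : Dom r P' Pt)
    (hc : ∀ j, i₀ ≤ j → j < j₀ → 1 ≤ c j ∧ c j ≤ j)
    (hP'' : ∀ j i, P'' j i =
      if i₀ ≤ j ∧ j < j₀ ∧ i = c j then P' j i - 1 else P' j i)
    (hPPeq : ∀ j i, 1 ≤ i → i ≤ j → j ≤ r + 1 → P'' j i = P j i) :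
    ∀ j i, 1 ≤ i → i ≤ j → j ≤ r + 1 → P' j i = Pt j i := by
  have hP'_eq : ∀ j i, 1 ≤ i → i ≤ j → j ≤ r + 1 → P' j i = raiseEntries P i₀ j₀ c j i := by
    intro j i hi hij hj
    have h := hP'' j i
    rw [hPPeq j i hi hij hj] at h
    unfold raiseEntries
    split_ifs at h ⊢ <;> omega
  have hPt_eq : Pt = raiseEntries P i₀ j₀ fun _ => i₀ := by
    funext j i
    rw [hPt, raiseEntries]
    exact if_congr (by tauto) rfl rfl
  have hc_le : ∀ j, i₀ ≤ j → j < j₀ → c j ≤ i₀ := fun j =>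
    le_of_dom_raiseEntries hi₀1 hj₀r ((hPt_eq ▸ hdom).congr_left hP'_eq)
  have hc_eq : ∀ j, i₀ ≤ j → j < j₀ → c j = i₀ := fun j =>
    eq_of_isGTPattern_raiseEntries hj₀r hjmin himin (hP'.congr hP'_eq)
      (fun j hij hjj => (hc j hij hjj).1) hc_le
  intro j i hi hij hj
  rw [hP'_eq j i hi hij hj, hPt_eq, raiseEntries_congr hc_eq]

/-- With P, Pt, i₀, j₀ as in the basic construction: if P' ≥ Pt is a GT pattern
with the same bounding sequence and P'' is obtained from P' by decreasing by 1
exactly one entry in each of rows i₀, …, j₀-1, and P'' = P, then P' = Pt. -/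
theorem doubleprime_eq_forces (r : ℕ) (lam : ℕ → ℤ) (P Pt : ℕ → ℕ → ℤ) (i₀ j₀ : ℕ)
    (hP : IsGTPattern r P) (hb : Bounded r P lam)
    (hlen : 0 < lengthP r P)
    (hj₀2 : 2 ≤ j₀) (hj₀r : j₀ ≤ r + 1)
    (hj₀d : ∃ i, 1 ≤ i ∧ i < j₀ ∧ P j₀ i ≠ P (j₀-1) i)
    (hjmin : ∀ j, 2 ≤ j → j < j₀ → ∀ i, 1 ≤ i → i < j → P j i = P (j-1) i)
    (hi₀1 : 1 ≤ i₀) (hi₀j : i₀ < j₀) (hi₀d : P j₀ i₀ ≠ P (j₀-1) i₀)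
    (himin : ∀ i, 1 ≤ i → i < i₀ → P j₀ i = P (j₀-1) i)
    (hPt : ∀ j i, Pt j i = if i = i₀ ∧ i₀ ≤ j ∧ j < j₀ then P j i + 1 else P j i)
    (P' P'' : ℕ → ℕ → ℤ) (c : ℕ → ℕ)
    (hP' : IsGTPattern r P') (hb' : Bounded r P' lam) (hdom : Dom r P' Pt)
    (hc : ∀ j, i₀ ≤ j → j < j₀ → 1 ≤ c j ∧ c j ≤ j)
    (hP'' : ∀ j i, P'' j i =
      if i₀ ≤ j ∧ j < j₀ ∧ i = c j then P' j i - 1 else P' j i)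
    (hP''pat : IsGTPattern r P'')
    (hPPeq : ∀ j i, 1 ≤ i → i ≤ j → j ≤ r + 1 → P'' j i = P j i) :
    ∀ j i, 1 ≤ i → i ≤ j → j ≤ r + 1 → P' j i = Pt j i :=
  doubleprime_eq_forces_general r P Pt i₀ j₀ hj₀r hjmin hi₀1 himin hPt P' P'' c hP' hdom hc hP''
    hPPeq
end

section
/- Suppose Q_{i₀}, …, Q_{j₀} is a sequence of GT patterns and σ is a permutation of {i₀, …, j₀−1} such that Q_{i₀} = P̃, Q_{j₀} = P, and for each k with i₀ ≤ k < j₀, the pattern Q_{k+1} is obtained from Q_k by decreasing by 1 the entry in position i₀ of row σ(k) only. Then σ is the identity permutation. -/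
/-!
Descending from `P̃` one step at a time, as long as `σ` has fixed `i₀, …, k-1` the pattern
`Q_k` is `P` with column `i₀` raised by one in rows `k, …, j₀-1`. By injectivity `σ k ≥ k`,
and `σ k > k` is impossible: rows `σ k - 1` and `σ k` of `P` agree in column `i₀` (by the
minimality of `j₀`), so after lowering row `σ k` the entry above it exceeds it by one,
breaking interlacing in `Q_{k+1}`.
-/

-- In this notation `P̃ = raiseColumn P i₀ i₀ j₀`.
def raiseColumn (P : ℕ → ℕ → ℤ) (c a b : ℕ) : ℕ → ℕ → ℤ :=
  fun j i => if i = c ∧ a ≤ j ∧ j < b then P j i + 1 else P j i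

def lowerEntry (P : ℕ → ℕ → ℤ) (row col : ℕ) : ℕ → ℕ → ℤ :=
  fun j i => if j = row ∧ i = col then P j i - 1 else P j i

theorem lowerEntry_raiseColumn_self {P : ℕ → ℕ → ℤ} {c a b : ℕ} (hab : a < b) :
    lowerEntry (raiseColumn P c a b) a c = raiseColumn P c (a + 1) b := by
  funext j i
  simp only [lowerEntry, raiseColumn]
  split_ifs <;> omega

theorem not_isGTPattern_lowerEntry_raiseColumn {r : ℕ} {P : ℕ → ℕ → ℤ} {c a b s : ℕ}
    (hc : 1 ≤ c) (hcs : c < s) (hsr : s ≤ r + 1) (has : a < s) (hsb : s < b)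
    (hcol : P s c = P (s - 1) c) :
    ¬ IsGTPattern r (lowerEntry (raiseColumn P c a b) s c) := by
  intro hpat
  have hint := (hpat c s hc hcs hsr).1
  simp only [lowerEntry, raiseColumn, true_and, and_true, and_self, if_true,
    if_pos (⟨has.le, hsb⟩ : a ≤ s ∧ s < b), if_pos (⟨by omega, by omega⟩ : a ≤ s - 1 ∧ s - 1 < b),
    if_neg (by omega : s - 1 ≠ s)] at hint
  omega

theorem le_apply_of_forall_apply_eq {f : ℕ → ℕ} (hf : Function.Injective f) {a k : ℕ}
    (hfix : ∀ m, a ≤ m → m < k → f m = m) (ha : a ≤ f k) : k ≤ f k := by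
  by_contra! hlt
  have := hf (hfix (f k) ha hlt)
  omega

theorem sigma_is_identity_general (r : ℕ) (P Pt : ℕ → ℕ → ℤ) (i₀ j₀ : ℕ)
    (hj₀r : j₀ ≤ r + 1)
    (hjmin : ∀ j, 2 ≤ j → j < j₀ → ∀ i, 1 ≤ i → i < j → P j i = P (j-1) i)
    (hi₀1 : 1 ≤ i₀)
    (hPt : ∀ j i, Pt j i = if i = i₀ ∧ i₀ ≤ j ∧ j < j₀ then P j i + 1 else P j i)
    (Q : ℕ → ℕ → ℕ → ℤ) (σ : Equiv.Perm ℕ)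
    (hσ : ∀ k, i₀ ≤ k → k < j₀ → i₀ ≤ σ k ∧ σ k < j₀)
    (hQpat : ∀ k, i₀ ≤ k → k ≤ j₀ → IsGTPattern r (Q k))
    (hQ0 : Q i₀ = Pt)
    (hstep : ∀ k, i₀ ≤ k → k < j₀ → ∀ j i,
      Q (k+1) j i = if j = σ k ∧ i = i₀ then Q k j i - 1 else Q k j i) :
    ∀ k, i₀ ≤ k → k < j₀ → σ k = k := by
  have hlower : ∀ k, i₀ ≤ k → k < j₀ → Q (k + 1) = lowerEntry (Q k) (σ k) i₀ :=
    fun k hk hkj => funext fun j => funext fun i => hstep k hk hkj j i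
  have hfixed : ∀ k, i₀ ≤ k → k ≤ j₀ →
      (∀ m, i₀ ≤ m → m < k → σ m = m) ∧ Q k = raiseColumn P i₀ k j₀ := by
    intro k hk
    induction k, hk using Nat.le_induction with
    | base => exact fun _ => ⟨fun m _ _ => by omega, hQ0.trans (funext fun j => funext (hPt j))⟩
    | succ k hk ih =>
      intro hkj
      obtain ⟨hfix, hQk⟩ := ih (by omega)
      obtain ⟨hσlo, hσhi⟩ := hσ k hk (by omega)
      have hσk : σ k = k := by
        refine le_antisymm ?_ (le_apply_of_forall_apply_eq σ.injective hfix hσlo)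
        by_contra! hlt
        have hpat := hQpat (k + 1) (by omega) hkj
        rw [hlower k hk (by omega), hQk] at hpat
        exact not_isGTPattern_lowerEntry_raiseColumn hi₀1 (by omega) (by omega) hlt hσhi
          (hjmin (σ k) (by omega) hσhi i₀ hi₀1 (by omega)) hpat
      refine ⟨fun m hm hmk => (Nat.lt_succ_iff_lt_or_eq.mp hmk).elim (hfix m hm) (· ▸ hσk), ?_⟩
      rw [hlower k hk (by omega), hσk, hQk, lowerEntry_raiseColumn_self (by omega)]
  intro k hk hkj
  exact (hfixed (k + 1) (by omega) hkj).1 k hk (Nat.lt_succ_self k)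

/-- If Q i₀, …, Q j₀ is a sequence of GT patterns and σ a permutation of
{i₀, …, j₀-1} with Q i₀ = Pt, Q j₀ = P, and Q (k+1) obtained from Q k by
decreasing by 1 the entry in position i₀ of row σ k only, then σ is the
identity on {i₀, …, j₀-1}. -/
theorem sigma_is_identity (r : ℕ) (lam : ℕ → ℤ) (P Pt : ℕ → ℕ → ℤ) (i₀ j₀ : ℕ)
    (hP : IsGTPattern r P) (hb : Bounded r P lam)
    (hlen : 0 < lengthP r P)
    (hj₀2 : 2 ≤ j₀) (hj₀r : j₀ ≤ r + 1)
    (hj₀d : ∃ i, 1 ≤ i ∧ i < j₀ ∧ P j₀ i ≠ P (j₀-1) i)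
    (hjmin : ∀ j, 2 ≤ j → j < j₀ → ∀ i, 1 ≤ i → i < j → P j i = P (j-1) i)
    (hi₀1 : 1 ≤ i₀) (hi₀j : i₀ < j₀) (hi₀d : P j₀ i₀ ≠ P (j₀-1) i₀)
    (himin : ∀ i, 1 ≤ i → i < i₀ → P j₀ i = P (j₀-1) i)
    (hPt : ∀ j i, Pt j i = if i = i₀ ∧ i₀ ≤ j ∧ j < j₀ then P j i + 1 else P j i)
    (Q : ℕ → ℕ → ℕ → ℤ) (σ : Equiv.Perm ℕ)
    (hσ : ∀ k, i₀ ≤ k → k < j₀ → i₀ ≤ σ k ∧ σ k < j₀)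
    (hQpat : ∀ k, i₀ ≤ k → k ≤ j₀ → IsGTPattern r (Q k))
    (hQ0 : Q i₀ = Pt) (hQlast : Q j₀ = P)
    (hstep : ∀ k, i₀ ≤ k → k < j₀ → ∀ j i,
      Q (k+1) j i = if j = σ k ∧ i = i₀ then Q k j i - 1 else Q k j i) :
    ∀ k, i₀ ≤ k → k < j₀ → σ k = k :=
  sigma_is_identity_general r P Pt i₀ j₀ hj₀r hjmin hi₀1 hPt Q σ hσ hQpat hQ0 hstep
end

section
/- With P, P̃, ℓ, ℓ̃, i₀, j₀ as before, one has the factorial identity: ∏_{p=i₀}^{j₀-1} (ℓ̃^{j₀-1}_{i₀} − ℓ̃^{j₀-1}_p)! / (ℓ̃^{j₀}_{i₀} − ℓ̃^{j₀-1}_p)! = (ℓ^{j₀}_{i₀} − ℓ^{j₀-1}_{i₀}) · (∏_{p=i₀+1}^{j₀-1} (ℓ^{j₀-1}_{i₀} − ℓ^{j₀-1}_p + 1)) · ∏_{p=i₀}^{j₀-1} (ℓ^{j₀-1}_{i₀} − ℓ^{j₀-1}_p)! / (ℓ^{j₀}_{i₀} − ℓ^{j₀-1}_p)!. -/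
/-- The factorial identity for the exceptional index (j₀, i₀), where
ℓ j i = P j i - i + 1 and ℓt is the analogue for Pt. -/
theorem factorial_identity_exceptional (r : ℕ) (lam : ℕ → ℤ) (P Pt : ℕ → ℕ → ℤ) (i₀ j₀ : ℕ)
    (hP : IsGTPattern r P) (hb : Bounded r P lam)
    (hlen : 0 < lengthP r P)
    (hj₀2 : 2 ≤ j₀) (hj₀r : j₀ ≤ r + 1)
    (hj₀d : ∃ i, 1 ≤ i ∧ i < j₀ ∧ P j₀ i ≠ P (j₀-1) i)
    (hjmin : ∀ j, 2 ≤ j → j < j₀ → ∀ i, 1 ≤ i → i < j → P j i = P (j-1) i)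
    (hi₀1 : 1 ≤ i₀) (hi₀j : i₀ < j₀) (hi₀d : P j₀ i₀ ≠ P (j₀-1) i₀)
    (himin : ∀ i, 1 ≤ i → i < i₀ → P j₀ i = P (j₀-1) i)
    (hPt : ∀ j i, Pt j i = if i = i₀ ∧ i₀ ≤ j ∧ j < j₀ then P j i + 1 else P j i) :
    (∏ p ∈ Finset.Icc i₀ (j₀-1),
      ((((Pt (j₀-1) i₀ - i₀ + 1) - (Pt (j₀-1) p - p + 1)).toNat.factorial : ℚ) /
       (((Pt j₀ i₀ - i₀ + 1) - (Pt (j₀-1) p - p + 1)).toNat.factorial : ℚ))) =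
    (((P j₀ i₀ - i₀ + 1) - (P (j₀-1) i₀ - i₀ + 1) : ℤ) : ℚ) *
    (∏ p ∈ Finset.Icc (i₀+1) (j₀-1),
      (((P (j₀-1) i₀ - i₀ + 1) - (P (j₀-1) p - p + 1) + 1 : ℤ) : ℚ)) *
    ∏ p ∈ Finset.Icc i₀ (j₀-1),
      ((((P (j₀-1) i₀ - i₀ + 1) - (P (j₀-1) p - p + 1)).toNat.factorial : ℚ) /
       (((P j₀ i₀ - i₀ + 1) - (P (j₀-1) p - p + 1)).toNat.factorial : ℚ)) := by

  have hPt1 : Pt (j₀-1) i₀ = P (j₀-1) i₀ + 1 := by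
    rw [hPt, if_pos ⟨rfl, by omega, by omega⟩]
  have hPt2 : Pt j₀ i₀ = P j₀ i₀ := by
    rw [hPt, if_neg]; rintro ⟨-, -, h⟩; omega
  have hPt3 : ∀ p, p ≠ i₀ → Pt (j₀-1) p = P (j₀-1) p := by
    intro p hp; rw [hPt, if_neg]; rintro ⟨h, -⟩; exact hp h
  have hd : P (j₀-1) i₀ + 1 ≤ P j₀ i₀ := by
    have h := (hP i₀ j₀ hi₀1 hi₀j hj₀r).1; omega
  have haux : ∀ k, i₀ + k ≤ j₀ - 1 → P (j₀-1) (i₀+k) ≤ P (j₀-1) i₀ := by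
    intro k
    induction k with
    | zero => intro _; simp
    | succ n ih =>
      intro hk
      have h1 := hP (i₀+n) (j₀-1) (by omega) (by omega) (by omega)
      have h2 := ih (by omega)
      have he : i₀ + (n+1) = (i₀ + n) + 1 := by omega
      rw [he]
      exact le_trans h1.2 (le_trans h1.1 h2)
  have hsplit : Finset.Icc i₀ (j₀-1) = insert i₀ (Finset.Icc (i₀+1) (j₀-1)) := by
    ext x; simp only [Finset.mem_insert, Finset.mem_Icc]; omega
  have hnot : i₀ ∉ Finset.Icc (i₀+1) (j₀-1) := by
    simp only [Finset.mem_Icc]; omega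
  rw [hsplit, Finset.prod_insert hnot, Finset.prod_insert hnot, hPt1, hPt2]
  have hB : (∏ x ∈ Finset.Icc (i₀ + 1) (j₀ - 1),
        ((((P (j₀ - 1) i₀ + 1 - ↑i₀ + 1 - (Pt (j₀ - 1) x - ↑x + 1)).toNat.factorial : ℚ)) /
          (((P j₀ i₀ - ↑i₀ + 1 - (Pt (j₀ - 1) x - ↑x + 1)).toNat.factorial : ℚ))))
      = ∏ x ∈ Finset.Icc (i₀ + 1) (j₀ - 1),
        (((P (j₀ - 1) i₀ - ↑i₀ + 1 - (P (j₀ - 1) x - ↑x + 1) + 1 : ℤ) : ℚ) *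
          ((((P (j₀ - 1) i₀ - ↑i₀ + 1 - (P (j₀ - 1) x - ↑x + 1)).toNat.factorial : ℚ)) /
            (((P j₀ i₀ - ↑i₀ + 1 - (P (j₀ - 1) x - ↑x + 1)).toNat.factorial : ℚ)))) := by
    refine Finset.prod_congr rfl ?_
    intro x hx
    simp only [Finset.mem_Icc] at hx
    rw [hPt3 x (by omega)]
    have hle : P (j₀-1) x ≤ P (j₀-1) i₀ := by
      have h := haux (x - i₀) (by omega)
      rwa [show i₀ + (x - i₀) = x from by omega] at h
    have ha : 0 ≤ P (j₀-1) i₀ - ↑i₀ + 1 - (P (j₀-1) x - ↑x + 1) := by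
      have hxi : (i₀ : ℤ) ≤ (x : ℤ) := by exact_mod_cast Nat.le_of_lt hx.1
      omega
    rw [show P (j₀-1) i₀ + 1 - ↑i₀ + 1 - (P (j₀-1) x - ↑x + 1)
        = (P (j₀-1) i₀ - ↑i₀ + 1 - (P (j₀-1) x - ↑x + 1)) + 1 from by ring]
    have h2 : (P (j₀-1) i₀ - ↑i₀ + 1 - (P (j₀-1) x - ↑x + 1) + 1).toNat
        = (P (j₀-1) i₀ - ↑i₀ + 1 - (P (j₀-1) x - ↑x + 1)).toNat + 1 := by omega
    rw [h2, Nat.factorial_succ]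
    have h3 : (((P (j₀-1) i₀ - ↑i₀ + 1 - (P (j₀-1) x - ↑x + 1)).toNat : ℚ))
        = ((P (j₀-1) i₀ - ↑i₀ + 1 - (P (j₀-1) x - ↑x + 1) : ℤ) : ℚ) := by
      exact_mod_cast Int.toNat_of_nonneg ha
    push_cast
    rw [h3]
    push_cast
    ring
  rw [hB, Finset.prod_mul_distrib]
  simp only [sub_self, Int.toNat_zero, Nat.factorial_zero, Nat.cast_one]
  rw [show P j₀ i₀ - ↑i₀ + 1 - (P (j₀ - 1) i₀ + 1 - ↑i₀ + 1)
      = (P j₀ i₀ - P (j₀-1) i₀) - 1 from by ring,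
    show P j₀ i₀ - ↑i₀ + 1 - (P (j₀ - 1) i₀ - ↑i₀ + 1)
      = P j₀ i₀ - P (j₀-1) i₀ from by ring]
  set d : ℤ := P j₀ i₀ - P (j₀-1) i₀ with hdd
  have hd1 : 1 ≤ d := by omega
  have ht : d.toNat = (d-1).toNat + 1 := by omega
  have hx1 : (((d-1).toNat.factorial : ℚ)) ≠ 0 := Nat.cast_ne_zero.mpr (Nat.factorial_ne_zero _)
  have hdq : (1:ℚ) / ((d-1).toNat.factorial : ℚ) = (d : ℚ) * (1 / (d.toNat.factorial : ℚ)) := by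
    rw [ht, Nat.factorial_succ]
    have h4 : (((d-1).toNat : ℚ)) = ((d - 1 : ℤ) : ℚ) := by
      exact_mod_cast Int.toNat_of_nonneg (by omega : (0:ℤ) ≤ d - 1)
    push_cast
    rw [h4]
    push_cast
    have hdq0 : (d : ℚ) ≠ 0 := by exact_mod_cast (by omega : d ≠ 0)
    field_simp
    rw [sub_add_cancel, div_self hdq0]
  rw [hdq]
  push_cast
  ring
end
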